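/- For every g ∈ L²(I) the initial value problem for the continuum limit equation ∂u/∂t(t,x) = ω + p∫₀¹ sin(u(t,y)−u(t,x)) dy − K∫₀¹ W₂(x,y) sin(2(u(t,y)−u(t,x))) dy with u(0,·) = g has a unique solution u ∈ C¹(ℝ, L²(I)); moreover, for every τ > 0 the map sending the initial datum g ∈ L²(I) to the solution restricted to [−τ,τ], regarded as an element of C([−τ,τ], L²(I)) with the supremum norm, is continuous. -/

import Mathlib

open MeasureTheory Real Set Filter

noncomputable section

/-- The Lebesgue measure restricted to the interval `I = [0,1]`. -/
def μI : MeasureTheory.Measure ℝ := MeasureTheory.volume.restrict (Set.Icc (0:ℝ) 1)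

/-- The space `L²(I)` of square-integrable real functions on `I = [0,1]`. -/
abbrev L2I : Type := MeasureTheory.Lp ℝ 2 μI

/-- The graphon of the `κ`-nearest neighbor graph. -/
def W2 (κ : ℝ) (x y : ℝ) : ℝ := if |x - y| ≤ κ ∨ 1 - κ ≤ |x - y| then 1 else 0

/-- The right-hand side of the continuum limit equation. -/
def CLrhs (ω p K κ : ℝ) (f : ℝ → ℝ) (x : ℝ) : ℝ :=
  ω + p * ∫ y in Set.Icc (0:ℝ) 1, Real.sin (f y - f x)
    - K * ∫ y in Set.Icc (0:ℝ) 1, W2 κ x y * Real.sin (2 * (f y - f x))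

/-- `u : ℝ → L²(I)` is a (C¹) solution of the continuum limit equation. -/
def IsCLSol (ω p K κ : ℝ) (u : ℝ → L2I) : Prop :=
  ContDiff ℝ 1 u ∧
  ∀ t : ℝ, ∃ v : L2I, HasDerivAt u v t ∧ (v : ℝ → ℝ) =ᵐ[μI] CLrhs ω p K κ (u t)

/-! The right-hand side of (CL) is a map `L²(I) → L²(I)` that is bounded (`|sin| ≤ 1`,
`0 ≤ W₂ ≤ 1` and `I` has measure one) and globally Lipschitz (`sin` is `1`-Lipschitz, and on `I`
the `L¹` norm is dominated by the `L²` norm). So (CL) is an autonomous ODE in the Banach space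
`L²(I)` with a bounded, globally Lipschitz vector field: Picard–Lindelöf applies on every time
interval, uniqueness is Lipschitz uniqueness, and Grönwall's inequality
`‖u t - u' t‖ ≤ ‖u 0 - u' 0‖ * exp (L * |t|)` gives continuous dependence on `[-τ, τ]`. -/

open scoped NNReal ENNReal Topology

section ODE

variable {E : Type*} [NormedAddCommGroup E] [NormedSpace ℝ E] {K : ℝ≥0} {F : E → E}

theorem IsIntegralCurve.dist_le_mul_exp_of_nonneg {v : ℝ → E → E} {γ₁ γ₂ : ℝ → E}
    (hv : ∀ t, LipschitzWith K (v t)) (h₁ : IsIntegralCurve γ₁ v) (h₂ : IsIntegralCurve γ₂ v)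
    {t : ℝ} (ht : 0 ≤ t) : dist (γ₁ t) (γ₂ t) ≤ dist (γ₁ 0) (γ₂ 0) * exp (K * t) := by
  simpa using dist_le_of_trajectories_ODE hv h₁.continuous.continuousOn
    (fun s _ ↦ (h₁ s).hasDerivWithinAt) h₂.continuous.continuousOn
    (fun s _ ↦ (h₂ s).hasDerivWithinAt) le_rfl t ⟨ht, le_rfl⟩

theorem IsIntegralCurve.comp_neg {v : ℝ → E → E} {γ : ℝ → E} (h : IsIntegralCurve γ v) :
    IsIntegralCurve (fun t ↦ γ (-t)) (fun t x ↦ -v (-t) x) := fun t ↦ by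
  simpa [Function.comp_def] using (h (-t)).scomp t (hasDerivAt_neg t)

theorem IsIntegralCurve.dist_le_mul_exp {v : ℝ → E → E} {γ₁ γ₂ : ℝ → E}
    (hv : ∀ t, LipschitzWith K (v t)) (h₁ : IsIntegralCurve γ₁ v) (h₂ : IsIntegralCurve γ₂ v)
    (t : ℝ) : dist (γ₁ t) (γ₂ t) ≤ dist (γ₁ 0) (γ₂ 0) * exp (K * |t|) := by
  rcases le_total 0 t with ht | ht
  · simpa [abs_of_nonneg ht] using h₁.dist_le_mul_exp_of_nonneg hv h₂ ht
  · simpa [abs_of_nonpos ht] using h₁.comp_neg.dist_le_mul_exp_of_nonneg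
      (fun s ↦ (hv (-s)).neg) h₂.comp_neg (neg_nonneg.2 ht)

theorem IsIntegralCurve.contDiff_one {γ : ℝ → E} (hF : Continuous F)
    (h : IsIntegralCurve γ fun _ ↦ F) : ContDiff ℝ 1 γ := by
  have hγ : Differentiable ℝ γ := fun t ↦ (h t).differentiableAt
  rw [contDiff_one_iff_deriv, funext fun t ↦ (h t).deriv]
  exact ⟨hγ, hF.comp hγ.continuous⟩

variable [CompleteSpace E]

theorem exists_forall_mem_Ioo_hasDerivAt_of_norm_le (hF : LipschitzWith K F) {M : ℝ}
    (hM : ∀ x, ‖F x‖ ≤ M) (x₀ : E) (T : ℝ≥0) :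
    ∃ γ : ℝ → E, γ 0 = x₀ ∧ ∀ t ∈ Ioo (-T : ℝ) T, HasDerivAt γ (F (γ t)) t := by
  have hT : (0 : ℝ) ∈ Icc (-T : ℝ) T := ⟨by simp, T.2⟩
  -- As `‖F‖ ≤ M`, no solution leaves the ball of radius `M * T` around `x₀` before time `T`.
  have hPL : IsPicardLindelof (fun _ ↦ F) ⟨0, hT⟩ x₀ (M.toNNReal * T) 0 M.toNNReal K :=
    .of_time_independent (fun x _ ↦ (hM x).trans M.le_coe_toNNReal) hF.lipschitzOnWith (by simp)
  obtain ⟨γ, hγ₀, hγ⟩ := hPL.exists_eq_forall_mem_Icc_hasDerivWithinAt₀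
  exact ⟨γ, hγ₀, fun t ht ↦ (hγ t (Ioo_subset_Icc_self ht)).hasDerivAt (Icc_mem_nhds ht.1 ht.2)⟩

theorem exists_isIntegralCurve_of_norm_le (hF : LipschitzWith K F) {M : ℝ}
    (hM : ∀ x, ‖F x‖ ≤ M) (x₀ : E) : ∃ γ : ℝ → E, γ 0 = x₀ ∧ IsIntegralCurve γ fun _ ↦ F := by
  -- Glue the solutions on `(-(n + 1), n + 1)`; by uniqueness they agree on overlaps.
  choose α hα₀ hα using fun n : ℕ ↦
    exists_forall_mem_Ioo_hasDerivAt_of_norm_le hF hM x₀ (n + 1)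
  push_cast at hα
  have hagree : ∀ m n : ℕ, m ≤ n → EqOn (α m) (α n) (Ioo (-(m + 1 : ℝ)) (m + 1)) := by
    intro m n hmn
    have hmn' : (m : ℝ) ≤ n := by exact_mod_cast hmn
    have hsub : Ioo (-(m + 1 : ℝ)) (m + 1) ⊆ Ioo (-(n + 1 : ℝ)) (n + 1) :=
      Ioo_subset_Ioo (by linarith) (by linarith)
    refine ODE_solution_unique_of_mem_Ioo (v := fun _ ↦ F) (s := fun _ ↦ univ) (t₀ := 0)
      (fun _ _ ↦ hF.lipschitzOnWith) ⟨by linarith, by linarith⟩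
      (fun t ht ↦ ⟨by simpa using hα m t ht, trivial⟩)
      (fun t ht ↦ ⟨by simpa using hα n t (hsub ht), trivial⟩) (by rw [hα₀, hα₀])
  have hloc : ∀ t, (fun s ↦ α ⌈|s|⌉₊ s) =ᶠ[𝓝 t] α (⌈|t|⌉₊ + 1) := by
    intro t
    filter_upwards [Ioo_mem_nhds (sub_one_lt t) (lt_add_one t)] with s hs
    have hst : |s| < ⌈|t|⌉₊ + 1 := by
      have : |s - t| < 1 := abs_sub_lt_iff.2 ⟨by linarith [hs.2], by linarith [hs.1]⟩
      linarith [abs_sub_abs_le_abs_sub s t, Nat.le_ceil |t|]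
    refine hagree _ _ ?_ (abs_lt.1 ?_)
    · exact Nat.ceil_le.2 (by exact_mod_cast hst.le)
    · linarith [Nat.le_ceil |s|]
  refine ⟨fun s ↦ α ⌈|s|⌉₊ s, by simpa using hα₀ 0, fun t ↦ ?_⟩
  show HasDerivAt _ (F (α ⌈|t|⌉₊ t)) t
  rw [(hloc t).eq_of_nhds]
  refine (hα _ t (abs_lt.1 ?_)).congr_of_eventuallyEq (hloc t)
  push_cast; linarith [Nat.le_ceil |t|]

end ODE

section NonlocalCoupling

variable {α : Type*} [MeasurableSpace α] {μ : Measure α} [IsProbabilityMeasure μ]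
  {W : α → α → ℝ} {φ : ℝ → ℝ} {f g : α → ℝ} {M : ℝ} {L : ℝ≥0}

def nonlocalCoupling (μ : Measure α) (W : α → α → ℝ) (φ : ℝ → ℝ) (f : α → ℝ) (x : α) : ℝ :=
  ∫ y, W x y * φ (f y - f x) ∂μ

theorem abs_mul_le_of_abs_le_one {a b c : ℝ} (ha : |a| ≤ 1) (hb : |b| ≤ c) : |a * b| ≤ c := by
  rw [abs_mul]
  exact (mul_le_of_le_one_left (abs_nonneg b) ha).trans hb

theorem integrable_nonlocalCoupling_integrand (hW : Measurable (Function.uncurry W))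
    (hW1 : ∀ x y, |W x y| ≤ 1) (hφ : Continuous φ) (hφM : ∀ z, |φ z| ≤ M) (hf : Measurable f)
    (x : α) : Integrable (fun y ↦ W x y * φ (f y - f x)) μ :=
  .of_bound (by fun_prop) M (ae_of_all _ fun y ↦ abs_mul_le_of_abs_le_one (hW1 x y) (hφM _))

theorem abs_nonlocalCoupling_le (hW1 : ∀ x y, |W x y| ≤ 1) (hφM : ∀ z, |φ z| ≤ M)
    (f : α → ℝ) (x : α) : |nonlocalCoupling μ W φ f x| ≤ M := by
  simpa [nonlocalCoupling] using norm_integral_le_of_norm_le_const (μ := μ) (C := M)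
    (f := fun y ↦ W x y * φ (f y - f x))
    (ae_of_all _ fun y ↦ abs_mul_le_of_abs_le_one (hW1 x y) (hφM (f y - f x)))

theorem measurable_nonlocalCoupling (hW : Measurable (Function.uncurry W)) (hφ : Continuous φ)
    (hf : Measurable f) : Measurable (nonlocalCoupling μ W φ f) :=
  StronglyMeasurable.measurable <| StronglyMeasurable.integral_prod_right <|
    Measurable.stronglyMeasurable (by fun_prop)

theorem abs_nonlocalCoupling_sub_le (hW : Measurable (Function.uncurry W))
    (hW1 : ∀ x y, |W x y| ≤ 1) (hφ : LipschitzWith L φ) (hφM : ∀ z, |φ z| ≤ M)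
    (hf : Measurable f) (hg : Measurable g) (hfg : Integrable (fun y ↦ f y - g y) μ) (x : α) :
    |nonlocalCoupling μ W φ f x - nonlocalCoupling μ W φ g x|
      ≤ L * (∫ y, |f y - g y| ∂μ + |f x - g x|) := by
  have hbound : ∀ y, |W x y * φ (f y - f x) - W x y * φ (g y - g x)|
      ≤ L * (|f y - g y| + |f x - g x|) := fun y ↦ by
    rw [← mul_sub]
    refine abs_mul_le_of_abs_le_one (hW1 x y) ?_
    calc |φ (f y - f x) - φ (g y - g x)| ≤ L * |(f y - f x) - (g y - g x)| := by
          simpa only [Real.dist_eq] using hφ.dist_le_mul _ _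
      _ ≤ L * (|f y - g y| + |f x - g x|) := by
          gcongr
          rw [show (f y - f x) - (g y - g x) = (f y - g y) - (f x - g x) by ring]
          exact abs_sub _ _
  have hint : Integrable (fun y ↦ (L : ℝ) * (|f y - g y| + |f x - g x|)) μ :=
    (hfg.abs.add (integrable_const _)).const_mul _
  unfold nonlocalCoupling
  rw [← integral_sub (integrable_nonlocalCoupling_integrand hW hW1 hφ.continuous hφM hf x)
    (integrable_nonlocalCoupling_integrand hW hW1 hφ.continuous hφM hg x)]
  calc |∫ y, W x y * φ (f y - f x) - W x y * φ (g y - g x) ∂μ|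
      ≤ ∫ y, L * (|f y - g y| + |f x - g x|) ∂μ :=
        norm_integral_le_of_norm_le (f := fun y ↦ W x y * φ (f y - f x) - W x y * φ (g y - g x))
          hint (ae_of_all _ hbound)
    _ = L * (∫ y, |f y - g y| ∂μ + |f x - g x|) := by
        rw [integral_const_mul, integral_add hfg.abs (integrable_const _), integral_const]
        simp

end NonlocalCoupling

section L2

variable {α : Type*} [MeasurableSpace α] {μ : Measure α} [IsProbabilityMeasure μ]
  {p : ℝ≥0∞} [Fact (1 ≤ p)]

theorem integral_norm_le_norm {E : Type*} [NormedAddCommGroup E] (h : Lp E p μ) :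
    ∫ x, ‖h x‖ ∂μ ≤ ‖h‖ := by
  rw [integral_norm_eq_lintegral_enorm (Lp.aestronglyMeasurable h),
    ← eLpNorm_one_eq_lintegral_enorm, Lp.norm_def]
  exact ENNReal.toReal_mono (Lp.eLpNorm_ne_top h)
    (eLpNorm_le_eLpNorm_of_exponent_le Fact.out (Lp.aestronglyMeasurable h))

theorem norm_le_of_ae_abs_le_integral_add {u v w : Lp ℝ p μ} {c : ℝ} (hc : 0 ≤ c)
    (hw : ∀ᵐ x ∂μ, |w x| ≤ c * (∫ y, |u y - v y| ∂μ + |u x - v x|)) :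
    ‖w‖ ≤ 2 * c * ‖u - v‖ := by
  set J := ∫ y, |u y - v y| ∂μ
  have hJ : J ≤ ‖u - v‖ := by
    have := integral_norm_le_norm (u - v)
    simp only [Real.norm_eq_abs] at this
    rwa [integral_congr_ae ((Lp.coeFn_sub u v).mono fun x hx ↦ by rw [hx])] at this
  have hJ0 : 0 ≤ J := integral_nonneg fun _ ↦ abs_nonneg _
  calc ‖w‖ ≤ ‖c • (Lp.const p μ J + |u - v|)‖ := by
        refine Lp.norm_le_norm_of_ae_le ?_
        filter_upwards [hw, Lp.coeFn_smul c (Lp.const p μ J + |u - v|),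
          Lp.coeFn_add (Lp.const p μ J) |u - v|, Lp.coeFn_const p μ J, Lp.coeFn_abs (u - v),
          Lp.coeFn_sub u v] with x hx h1 h2 h3 h4 h5
        simp only [h1, h2, h3, h4, h5, Pi.smul_apply, Pi.add_apply, Pi.sub_apply,
          Function.const_apply, smul_eq_mul, Real.norm_eq_abs]
        exact hx.trans (le_abs_self _)
    _ ≤ c * (J + ‖u - v‖) := by
        rw [norm_smul, Real.norm_of_nonneg hc]
        gcongr
        refine (norm_add_le _ _).trans_eq ?_
        rw [norm_abs_eq_norm, Lp.norm_const p μ J (zero_lt_one.trans_le Fact.out).ne']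
        simp [abs_of_nonneg hJ0]
    _ ≤ 2 * c * ‖u - v‖ := by nlinarith

end L2

instance : IsProbabilityMeasure μI :=
  ⟨by simp [μI]⟩

theorem abs_W2_le_one (κ x y : ℝ) : |W2 κ x y| ≤ 1 := by
  unfold W2; split_ifs <;> norm_num

theorem measurable_W2 (κ : ℝ) : Measurable (Function.uncurry (W2 κ)) := by
  refine Measurable.ite ?_ measurable_const measurable_const
  have hm : Measurable fun q : ℝ × ℝ ↦ |q.1 - q.2| := by fun_prop
  exact (measurableSet_le hm measurable_const).union (measurableSet_le measurable_const hm)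

theorem lipschitzWith_sin_two_mul : LipschitzWith 2 fun z : ℝ ↦ sin (2 * z) := by
  refine .of_dist_le_mul fun a b ↦ ?_
  simpa [Real.dist_eq, ← mul_sub, abs_mul] using abs_sin_sub_sin_le (2 * a) (2 * b)

-- The binder of the first integral in `CLrhs` extends to the end of the expression, so the
-- `K`-term sits inside it, as a constant in `y`.
theorem CLrhs_eq (ω p K κ : ℝ) {f : ℝ → ℝ} (hf : Measurable f) (x : ℝ) :
    CLrhs ω p K κ f x = ω + p * nonlocalCoupling μI (fun _ _ ↦ 1) sin f x
      - p * K * nonlocalCoupling μI (W2 κ) (fun z ↦ sin (2 * z)) f x := by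
  have hsin : Integrable (fun y ↦ sin (f y - f x)) μI := by
    simpa using integrable_nonlocalCoupling_integrand (μ := μI) (W := fun _ _ ↦ 1) measurable_const
      (by simp) continuous_sin abs_sin_le_one hf x
  change ω + p * ∫ y, (sin (f y - f x) - K * ∫ z, W2 κ x z * sin (2 * (f z - f x)) ∂μI) ∂μI = _
  rw [integral_sub hsin (integrable_const _), integral_const]
  simp only [nonlocalCoupling, one_mul, probReal_univ, one_smul]
  ring

theorem abs_CLrhs_le (ω p K κ : ℝ) {f : ℝ → ℝ} (hf : Measurable f) (x : ℝ) :
    |CLrhs ω p K κ f x| ≤ |ω| + |p| + |p * K| := by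
  have h₁ := abs_nonlocalCoupling_le (μ := μI) (W := fun _ _ ↦ 1) (by simp) abs_sin_le_one f x
  have h₂ := abs_nonlocalCoupling_le (μ := μI) (abs_W2_le_one κ)
    (fun z ↦ abs_sin_le_one (2 * z)) f x
  rw [CLrhs_eq ω p K κ hf]
  generalize nonlocalCoupling μI (fun _ _ ↦ 1) sin f x = a at h₁ ⊢
  generalize nonlocalCoupling μI (W2 κ) (fun z ↦ sin (2 * z)) f x = b at h₂ ⊢
  calc |ω + p * a - p * K * b| ≤ |ω| + |p| * |a| + |p * K| * |b| := by
        rw [← abs_mul, ← abs_mul]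
        exact (abs_sub _ _).trans (add_le_add_left (abs_add_le _ _) _)
    _ ≤ |ω| + |p| + |p * K| := by
        gcongr
        · exact mul_le_of_le_one_right (abs_nonneg _) h₁
        · exact mul_le_of_le_one_right (abs_nonneg _) h₂

theorem abs_CLrhs_sub_CLrhs_le (ω p K κ : ℝ) {f g : ℝ → ℝ} (hf : Measurable f)
    (hg : Measurable g) (hfg : Integrable (fun y ↦ f y - g y) μI) (x : ℝ) :
    |CLrhs ω p K κ f x - CLrhs ω p K κ g x|
      ≤ (|p| + 2 * |p * K|) * (∫ y, |f y - g y| ∂μI + |f x - g x|) := by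
  have h₁ := abs_nonlocalCoupling_sub_le (μ := μI) (W := fun _ _ ↦ 1) measurable_const
    (by simp) lipschitzWith_sin abs_sin_le_one hf hg hfg x
  have h₂ := abs_nonlocalCoupling_sub_le (μ := μI) (measurable_W2 κ) (abs_W2_le_one κ)
    lipschitzWith_sin_two_mul (fun z ↦ abs_sin_le_one (2 * z)) hf hg hfg x
  have hJ : 0 ≤ ∫ y, |f y - g y| ∂μI := integral_nonneg fun _ ↦ abs_nonneg _
  rw [CLrhs_eq ω p K κ hf, CLrhs_eq ω p K κ hg]
  set S := nonlocalCoupling μI (fun _ _ ↦ 1) sin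
  set T := nonlocalCoupling μI (W2 κ) fun z ↦ sin (2 * z)
  calc |ω + p * S f x - p * K * T f x - (ω + p * S g x - p * K * T g x)|
      ≤ |p| * |S f x - S g x| + |p * K| * |T f x - T g x| := by
        rw [← abs_mul, ← abs_mul]
        exact (abs_sub _ _).trans_eq' (by ring_nf)
    _ ≤ (|p| + 2 * |p * K|) * (∫ y, |f y - g y| ∂μI + |f x - g x|) := by
        push_cast at h₁ h₂
        nlinarith [abs_nonneg p, abs_nonneg (p * K), abs_nonneg (f x - g x)]

theorem measurable_CLrhs (ω p K κ : ℝ) {f : ℝ → ℝ} (hf : Measurable f) :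
    Measurable (CLrhs ω p K κ f) := by
  rw [funext (CLrhs_eq ω p K κ hf)]
  exact (measurable_const.add
    ((measurable_nonlocalCoupling measurable_const continuous_sin hf).const_mul p)).sub
    ((measurable_nonlocalCoupling (measurable_W2 κ) (by fun_prop) hf).const_mul _)

theorem memLp_CLrhs (ω p K κ : ℝ) (f : L2I) : MemLp (CLrhs ω p K κ f) 2 μI :=
  have hf := (Lp.stronglyMeasurable f).measurable
  .of_bound (measurable_CLrhs ω p K κ hf).aestronglyMeasurable _
    (ae_of_all _ (abs_CLrhs_le ω p K κ hf))

def CLfield (ω p K κ : ℝ) (f : L2I) : L2I :=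
  (memLp_CLrhs ω p K κ f).toLp _

theorem coeFn_CLfield (ω p K κ : ℝ) (f : L2I) : CLfield ω p K κ f =ᵐ[μI] CLrhs ω p K κ f :=
  MemLp.coeFn_toLp _

theorem norm_CLfield_le (ω p K κ : ℝ) (f : L2I) : ‖CLfield ω p K κ f‖ ≤ |ω| + |p| + |p * K| := by
  have hf := (Lp.stronglyMeasurable f).measurable
  simpa [measureUnivNNReal] using Lp.norm_le_of_ae_bound (f := CLfield ω p K κ f)
    (C := |ω| + |p| + |p * K|) (by positivity) <| (coeFn_CLfield ω p K κ f).mono fun x hx ↦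
      (congrArg abs hx).trans_le (abs_CLrhs_le ω p K κ hf x)

theorem lipschitzWith_CLfield (ω p K κ : ℝ) :
    LipschitzWith (2 * (‖p‖₊ + 2 * ‖p * K‖₊)) (CLfield ω p K κ) := by
  refine .of_dist_le_mul fun f g ↦ ?_
  have hf := (Lp.stronglyMeasurable f).measurable
  have hg := (Lp.stronglyMeasurable g).measurable
  have hfg : Integrable (fun y ↦ f y - g y) μI :=
    ((Lp.memLp f).sub (Lp.memLp g)).integrable one_le_two
  simp only [dist_eq_norm, NNReal.coe_mul, NNReal.coe_add, coe_nnnorm, Real.norm_eq_abs,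
    NNReal.coe_ofNat]
  refine norm_le_of_ae_abs_le_integral_add (c := |p| + 2 * |p * K|) (by positivity) ?_
  filter_upwards [Lp.coeFn_sub (CLfield ω p K κ f) (CLfield ω p K κ g), coeFn_CLfield ω p K κ f,
    coeFn_CLfield ω p K κ g] with x h h₁ h₂
  rw [h, Pi.sub_apply, h₁, h₂]
  exact abs_CLrhs_sub_CLrhs_le ω p K κ hf hg hfg x

theorem isCLSol_iff (ω p K κ : ℝ) (u : ℝ → L2I) :
    IsCLSol ω p K κ u ↔ IsIntegralCurve u fun _ ↦ CLfield ω p K κ := by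
  refine ⟨fun ⟨_, hu⟩ t ↦ ?_, fun hu ↦ ⟨?_, fun t ↦ ⟨_, hu t, coeFn_CLfield ω p K κ (u t)⟩⟩⟩
  · obtain ⟨v, hv, hv_eq⟩ := hu t
    show HasDerivAt u (CLfield ω p K κ (u t)) t
    rwa [← Lp.ext (hv_eq.trans (coeFn_CLfield ω p K κ (u t)).symm)]
  · exact hu.contDiff_one (lipschitzWith_CLfield ω p K κ).continuous

theorem existence_uniqueness_continuous_dependence_CL_general
    (κ p K ω : ℝ) :
    (∀ g : L2I, ∃! u : ℝ → L2I, IsCLSol ω p K κ u ∧ u 0 = g) ∧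
    (∀ τ > (0:ℝ), ∀ u : ℝ → L2I, IsCLSol ω p K κ u →
      ∀ ε > (0:ℝ), ∃ δ > (0:ℝ), ∀ u' : ℝ → L2I, IsCLSol ω p K κ u' →
        ‖u 0 - u' 0‖ < δ → ∀ t ∈ Set.Icc (-τ) τ, ‖u t - u' t‖ < ε) := by
  have hF := lipschitzWith_CLfield ω p K κ
  set L : ℝ := ↑(2 * (‖p‖₊ + 2 * ‖p * K‖₊))
  simp only [isCLSol_iff]
  refine ⟨fun g ↦ ?_, fun τ _ u hu ε hε ↦ ⟨ε / exp (L * τ), by positivity, fun u' hu' hδ t ht ↦ ?_⟩⟩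
  · obtain ⟨u, hu₀, hu⟩ := exists_isIntegralCurve_of_norm_le hF (norm_CLfield_le ω p K κ) g
    refine ⟨u, ⟨hu, hu₀⟩, fun v ⟨hv, hv₀⟩ ↦ ?_⟩
    exact ODE_solution_unique_univ (s := fun _ ↦ univ) (t₀ := 0) (fun _ ↦ hF.lipschitzOnWith)
      (fun t ↦ ⟨hv t, trivial⟩) (fun t ↦ ⟨hu t, trivial⟩) (hv₀.trans hu₀.symm)
  · have hdist := hu.dist_le_mul_exp (fun _ ↦ hF) hu' t
    rw [dist_eq_norm, dist_eq_norm] at hdist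
    calc ‖u t - u' t‖ ≤ ‖u 0 - u' 0‖ * exp (L * |t|) := hdist
      _ ≤ ‖u 0 - u' 0‖ * exp (L * τ) := by gcongr; exact abs_le.2 ht
      _ < ε / exp (L * τ) * exp (L * τ) := by gcongr
      _ = ε := div_mul_cancel₀ ε (exp_ne_zero _)

/-- Existence, uniqueness, and continuous dependence on initial data for the IVP of the
continuum limit equation. -/
theorem existence_uniqueness_continuous_dependence_CL
    (κ p K ω : ℝ) (hκ : κ ∈ Set.Ioo (0:ℝ) (1/2)) (hp : 0 < p) :
    (∀ g : L2I, ∃! u : ℝ → L2I, IsCLSol ω p K κ u ∧ u 0 = g) ∧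
    (∀ τ > (0:ℝ), ∀ u : ℝ → L2I, IsCLSol ω p K κ u →
      ∀ ε > (0:ℝ), ∃ δ > (0:ℝ), ∀ u' : ℝ → L2I, IsCLSol ω p K κ u' →
        ‖u 0 - u' 0‖ < δ → ∀ t ∈ Set.Icc (-τ) τ, ‖u t - u' t‖ < ε) :=
  existence_uniqueness_continuous_dependence_CL_general κ p K ω
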